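/- Let α ∈ (0,1), let t > 0, and let f : ℝ → ℝ be continuously differentiable on [0,t]. Then (1/Γ(1−α)) ∫₀ᵗ (t−τ)^{−α} f'(τ) dτ = (1/Γ(1−α)) · [ (f(t) − f(0))/t^{α} + α·t^{1−α} · ∫₀¹ ((f(t) − f(t − t·τ))/(t·τ)) · τ^{−α} dτ ]. -/

import Mathlib

/-!
Substituting `s = t - τ` turns the Caputo integral into `∫₀ᵗ s^(-α) g'(s) ds` with
`g s = f t - f (t - s)`, so that `g 0 = 0`. Integrating by parts against `s^(-α)` produces no
boundary term at `0`, because `g` is Lipschitz and hence `s^(-α) g(s) = O(s^(1-α))`; this leaves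
`t^(-α) g(t) + α ∫₀ᵗ s^(-α-1) g(s) ds`, and the rescaling `s = t τ` moves the last integral to the
unit interval.
-/

open MeasureTheory Real Set Filter Topology
open scoped NNReal

section Substitution

variable {E : Type*} [NormedAddCommGroup E] [NormedSpace ℝ E] {t : ℝ}

theorem integral_Ioo_zero_eq_intervalIntegral (ht : 0 ≤ t) (F : ℝ → E) :
    ∫ s in Ioo 0 t, F s = ∫ s in (0)..t, F s := by
  rw [intervalIntegral.integral_of_le ht, integral_Ioc_eq_integral_Ioo]

theorem integral_Ioo_zero_comp_const_sub (ht : 0 ≤ t) (F : ℝ → E) :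
    ∫ s in Ioo 0 t, F (t - s) = ∫ s in Ioo 0 t, F s := by
  simp only [integral_Ioo_zero_eq_intervalIntegral ht, intervalIntegral.integral_comp_sub_left,
    sub_self, sub_zero]

theorem integral_Ioo_zero_eq_smul_integral_comp_mul (ht : 0 < t) (F : ℝ → E) :
    ∫ s in Ioo 0 t, F s = t • ∫ τ in Ioo 0 1, F (t * τ) := by
  rw [integral_Ioo_zero_eq_intervalIntegral ht.le,
    integral_Ioo_zero_eq_intervalIntegral zero_le_one,
    intervalIntegral.integral_comp_mul_left _ ht.ne', smul_inv_smul₀ ht.ne', mul_zero, mul_one]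

end Substitution

theorem integral_Ioo_rpow_sub_one_mul_eq_integral_unitInterval {t : ℝ} (ht : 0 < t) (α : ℝ)
    (φ : ℝ → ℝ) :
    ∫ s in Ioo 0 t, s ^ (-α - 1) * φ s
      = t ^ (1 - α) * ∫ τ in Ioo (0 : ℝ) 1, (φ (t * τ) / (t * τ)) * τ ^ (-α) := by
  rw [integral_Ioo_zero_eq_smul_integral_comp_mul ht, smul_eq_mul, ← integral_const_mul,
    ← integral_const_mul]
  refine setIntegral_congr_fun measurableSet_Ioo fun τ hτ => ?_
  have htτ : t * τ ≠ 0 := (mul_pos ht hτ.1).ne'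
  rw [rpow_sub_one htτ, mul_rpow ht.le hτ.1.le, sub_eq_neg_add, rpow_add_one ht.ne']
  field_simp

theorem integrableOn_Ioo_of_norm_le_mul_rpow {α t C : ℝ} (hα : α < 1) {F : ℝ → ℝ}
    (hF : AEStronglyMeasurable F (volume.restrict (Ioo 0 t)))
    (hbound : ∀ s ∈ Ioo 0 t, ‖F s‖ ≤ C * s ^ (-α)) : IntegrableOn F (Ioo 0 t) := by
  rcases le_or_gt t 0 with ht | ht
  · simp [Ioo_eq_empty_of_le ht]
  refine Integrable.mono'
    (((intervalIntegral.integrableOn_Ioo_rpow_iff (s := -α) ht).2 (by linarith)).const_mul C) hF ?_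
  exact (ae_restrict_iff' measurableSet_Ioo).2 (Eventually.of_forall hbound)

section FractionalIntegrationByParts

variable {α t : ℝ} {g : ℝ → ℝ} {K : ℝ≥0}

theorem LipschitzOnWith.norm_le_mul_of_eq_zero (hg : LipschitzOnWith K g (Icc 0 t))
    (hg0 : g 0 = 0) {s : ℝ} (hs : s ∈ Icc 0 t) : ‖g s‖ ≤ K * s := by
  have h := hg.dist_le_mul s hs 0 (left_mem_Icc.2 (hs.1.trans hs.2))
  rwa [dist_eq_norm, hg0, sub_zero, Real.dist_eq, sub_zero, abs_of_nonneg hs.1] at h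

theorem tendsto_rpow_neg_mul_nhdsGT_zero (hα : α < 1) (ht : 0 < t)
    (hg : LipschitzOnWith K g (Icc 0 t)) (hg0 : g 0 = 0) :
    Tendsto (fun s => s ^ (-α) * g s) (𝓝[>] 0) (𝓝 0) := by
  have hlim : Tendsto (fun s : ℝ => (K : ℝ) * s ^ (1 - α)) (𝓝[>] 0) (𝓝 0) := by
    have h := (continuousAt_rpow_const 0 (1 - α) (Or.inr (by linarith))).tendsto.const_mul
      (K : ℝ)
    rw [zero_rpow (by linarith), mul_zero] at h
    exact h.mono_left nhdsWithin_le_nhds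
  refine squeeze_zero_norm' ?_ hlim
  filter_upwards [Ioo_mem_nhdsGT ht] with s hs
  rw [norm_mul, norm_of_nonneg (rpow_nonneg hs.1.le _), sub_eq_neg_add, rpow_add_one hs.1.ne']
  calc s ^ (-α) * ‖g s‖ ≤ s ^ (-α) * (K * s) :=
        mul_le_mul_of_nonneg_left (hg.norm_le_mul_of_eq_zero hg0 (Ioo_subset_Icc_self hs))
          (rpow_nonneg hs.1.le _)
    _ = K * (s ^ (-α) * s) := by ring

theorem integrableOn_rpow_neg_mul_deriv_of_lipschitzOn (hα : α < 1)
    (hg : LipschitzOnWith K g (Icc 0 t)) :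
    IntegrableOn (fun s => s ^ (-α) * deriv g s) (Ioo 0 t) := by
  refine integrableOn_Ioo_of_norm_le_mul_rpow hα (C := K)
    (((continuousOn_id.rpow_const fun s hs => Or.inl hs.1.ne').aestronglyMeasurable
      measurableSet_Ioo).mul (measurable_deriv g).aestronglyMeasurable) fun s hs => ?_
  rw [norm_mul, norm_of_nonneg (rpow_nonneg hs.1.le _), mul_comm]
  exact mul_le_mul_of_nonneg_right (norm_deriv_le_of_lipschitzOn (Icc_mem_nhds hs.1 hs.2) hg)
    (rpow_nonneg hs.1.le _)

theorem integrableOn_rpow_neg_sub_one_mul_of_lipschitzOn (hα : α < 1)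
    (hg : LipschitzOnWith K g (Icc 0 t)) (hg0 : g 0 = 0) :
    IntegrableOn (fun s => s ^ (-α - 1) * g s) (Ioo 0 t) := by
  refine integrableOn_Ioo_of_norm_le_mul_rpow hα (C := K)
    (((continuousOn_id.rpow_const fun s hs => Or.inl hs.1.ne').mul
      (hg.continuousOn.mono Ioo_subset_Icc_self)).aestronglyMeasurable measurableSet_Ioo)
    fun s hs => ?_
  rw [norm_mul, norm_of_nonneg (rpow_nonneg hs.1.le _), rpow_sub_one hs.1.ne']
  calc s ^ (-α) / s * ‖g s‖ ≤ s ^ (-α) / s * (K * s) :=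
        mul_le_mul_of_nonneg_left (hg.norm_le_mul_of_eq_zero hg0 (Ioo_subset_Icc_self hs))
          (div_nonneg (rpow_nonneg hs.1.le _) hs.1.le)
    _ = K * s ^ (-α) := by field_simp [hs.1.ne']

theorem integral_rpow_neg_mul_deriv_of_lipschitzOn (hα : α < 1) (ht : 0 < t)
    (hg : LipschitzOnWith K g (Icc 0 t)) (hgd : DifferentiableOn ℝ g (Ioo 0 t)) (hg0 : g 0 = 0) :
    ∫ s in Ioo 0 t, s ^ (-α) * deriv g s
      = t ^ (-α) * g t + α * ∫ s in Ioo 0 t, s ^ (-α - 1) * g s := by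
  have hI₁ := integrableOn_rpow_neg_mul_deriv_of_lipschitzOn hα hg
  have hI₂ := integrableOn_rpow_neg_sub_one_mul_of_lipschitzOn hα hg hg0
  have hderiv : ∀ s ∈ Ioo 0 t, HasDerivAt (fun s => s ^ (-α) * g s)
      (-α * (s ^ (-α - 1) * g s) + s ^ (-α) * deriv g s) s := by
    intro s hs
    have h := (hasDerivAt_rpow_const (p := -α) (Or.inl hs.1.ne')).fun_mul
      (hgd.differentiableAt (Ioo_mem_nhds hs.1 hs.2)).hasDerivAt
    exact h.congr_deriv (by ring)
  have hlim_t : Tendsto (fun s => s ^ (-α) * g s) (𝓝[<] t) (𝓝 (t ^ (-α) * g t)) := by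
    have hcont : ContinuousWithinAt (fun s => s ^ (-α) * g s) (Icc 0 t) t :=
      ((continuousAt_rpow_const t (-α) (Or.inl ht.ne')).continuousWithinAt).mul
        (hg.continuousOn t (right_mem_Icc.2 ht.le))
    rw [← nhdsWithin_Ioo_eq_nhdsLT ht]
    exact hcont.tendsto.mono_left (nhdsWithin_mono _ Ioo_subset_Icc_self)
  have hFTC := intervalIntegral.integral_eq_sub_of_hasDerivAt_of_tendsto ht hderiv
    ((intervalIntegrable_iff_integrableOn_Ioo_of_le ht.le).2 ((hI₂.const_mul (-α)).add hI₁))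
    (tendsto_rpow_neg_mul_nhdsGT_zero hα ht hg hg0) hlim_t
  rw [← integral_Ioo_zero_eq_intervalIntegral ht.le, integral_add (hI₂.const_mul (-α)) hI₁,
    integral_const_mul, sub_zero] at hFTC
  linarith

end FractionalIntegrationByParts

/-- Rescaled unit-interval representation of the Caputo fractional derivative of
order `α ∈ (0,1)` (equation (represent_1) of the paper). -/
theorem caputo_unit_interval_representation_order_lt_one
    (α t : ℝ) (hα : α ∈ Set.Ioo (0 : ℝ) 1) (ht : 0 < t)
    (f : ℝ → ℝ) (hf : ContDiffOn ℝ 1 f (Set.Icc 0 t)) :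
    (1 / Real.Gamma (1 - α)) * ∫ τ in Set.Ioo 0 t, (t - τ) ^ (-α) * deriv f τ =
      (1 / Real.Gamma (1 - α)) *
        ((f t - f 0) / t ^ α
          + α * t ^ (1 - α) *
              ∫ τ in Set.Ioo (0 : ℝ) 1,
                ((f t - f (t - t * τ)) / (t * τ)) * τ ^ (-α)) := by
  set g : ℝ → ℝ := fun s => f t - f (t - s) with hg_def
  have hg : ContDiffOn ℝ 1 g (Icc 0 t) :=
    contDiffOn_const.sub (hf.comp (contDiffOn_const.sub contDiffOn_id)
      fun s hs => ⟨sub_nonneg.2 hs.2, sub_le_self t hs.1⟩)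
  obtain ⟨K, hK⟩ := hg.exists_lipschitzOnWith one_ne_zero (convex_Icc 0 t) isCompact_Icc
  have hreflect : ∫ τ in Ioo 0 t, (t - τ) ^ (-α) * deriv f τ
      = ∫ s in Ioo 0 t, s ^ (-α) * deriv g s := by
    rw [← integral_Ioo_zero_comp_const_sub ht.le]
    simp only [hg_def, deriv_const_sub, deriv_comp_const_sub, neg_neg, sub_sub_cancel]
  rw [hreflect, integral_rpow_neg_mul_deriv_of_lipschitzOn hα.2 ht hK
      ((hg.differentiableOn one_ne_zero).mono Ioo_subset_Icc_self) (by simp [hg_def]),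
    integral_Ioo_rpow_sub_one_mul_eq_integral_unitInterval ht, rpow_neg ht.le,
    show g t = f t - f 0 by simp [hg_def]]
  ring
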